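/- arXiv:1412.3570 — 5 statements merged into one kernel-verified Lean document; each statement's English description precedes it below -/
import Mathlib

section
/- Let f, g, h be polynomials in K[X₁,…,X_n] with f = g·h. Then the Newton polytope of f equals the Minkowski sum of the Newton polytopes of g and h: Newt(f) = Newt(g) + Newt(h). -/
open Pointwise

variable {K : Type*} {n : ℕ}

/-- The Newton polytope of a multivariate polynomial: the convex hull in `ℝⁿ` of the
exponent vectors of its nonzero monomials. -/
noncomputable def newtonPolytope [CommSemiring K] (f : MvPolynomial (Fin n) K) :
    Set (Fin n → ℝ) :=
  convexHull ℝ ((fun (m : Fin n →₀ ℕ) (i : Fin n) => (m i : ℝ)) '' ↑f.support)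

/-!
`Newt(g * h) ⊆ Newt(g) + Newt(h)` because every exponent of `g * h` is a sum of exponents of `g`
and `h`. Conversely, `Newt(g) + Newt(h)` is the convex hull of the finite set `A + B` of sums of
exponents, hence of its vertices. A vertex `p` of `conv(A + B)` decomposes uniquely as `p = a + b`
with `a ∈ A`, `b ∈ B`, so the coefficient of `x^p` in `g * h` is the product of two nonzero
coefficients; thus every vertex is an exponent of `g * h`.
-/

section ExtremePoints

variable {𝕜 E : Type*} [Ring 𝕜] [LinearOrder 𝕜] [IsStrictOrderedRing 𝕜] [Invertible (2 : 𝕜)]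
  [AddCommGroup E] [Module 𝕜 E]

/-- If `a + b = a₀ + b₀`, then `a₀ + b₀` is the midpoint of `a + b₀` and `a₀ + b`. -/
theorem uniqueAdd_of_add_mem_extremePoints {A B : Finset E} {S : Set E}
    (hS : (A : Set E) + B ⊆ S) {a₀ b₀ : E} (ha₀ : a₀ ∈ A) (hb₀ : b₀ ∈ B)
    (hp : a₀ + b₀ ∈ S.extremePoints 𝕜) : UniqueAdd A B a₀ b₀ := by
  intro a b ha hb hab
  have hmid : a₀ + b₀ ∈ openSegment 𝕜 (a + b₀) (a₀ + b) := by
    convert mem_openSegment_add_sub (𝕜 := 𝕜) (a₀ + b₀) (a - a₀) using 2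
    · abel
    · rw [← hab]; abel
  have ha' : a = a₀ := add_right_cancel ((mem_extremePoints.1 hp).2 _
    (hS (Set.add_mem_add ha hb₀)) _ (hS (Set.add_mem_add ha₀ hb)) hmid).1
  subst ha'
  exact ⟨rfl, add_left_cancel hab⟩

end ExtremePoints

section KreinMilman

variable {E : Type*} [AddCommGroup E] [Module ℝ E] [TopologicalSpace E] [T2Space E]
  [IsTopologicalAddGroup E] [ContinuousSMul ℝ E] [LocallyConvexSpace ℝ E]

theorem Set.Finite.convexHull_extremePoints_convexHull {s : Set E} (hs : s.Finite) :
    convexHull ℝ ((convexHull ℝ s).extremePoints ℝ) = convexHull ℝ s := by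
  have hext : ((convexHull ℝ s).extremePoints ℝ).Finite :=
    hs.subset extremePoints_convexHull_subset
  rw [← hext.isClosed_convexHull ℝ |>.closure_eq]
  exact closure_convexHull_extremePoints (hs.isCompact_convexHull ℝ) (convex_convexHull ℝ s)

end KreinMilman

namespace MvPolynomial

variable {σ R : Type*} [CommSemiring R]

theorem add_mem_support_mul_of_uniqueAdd [NoZeroDivisors R] {g h : MvPolynomial σ R}
    {u v : σ →₀ ℕ} (hu : u ∈ g.support) (hv : v ∈ h.support)
    (huv : UniqueAdd g.support h.support u v) : u + v ∈ (g * h).support := by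
  rw [mem_support_iff] at hu hv ⊢
  rw [coeff, AddMonoidAlgebra.coeff_mul_add_of_uniqueAdd huv]
  exact mul_ne_zero hu hv

theorem image_support_mul_subset {M : Type*} [AddCommMonoid M] (φ : (σ →₀ ℕ) →+ M)
    (g h : MvPolynomial σ R) :
    φ '' (g * h).support ⊆ φ '' g.support + φ '' h.support := by
  classical
  rw [← Set.image_add, ← Finset.coe_add]
  exact Set.image_mono (support_mul g h)

variable {E : Type*} [AddCommGroup E] [Module ℝ E]

theorem extremePoints_convexHull_image_support_add_subset [NoZeroDivisors R]
    {φ : (σ →₀ ℕ) →+ E} (hφ : Function.Injective φ) (g h : MvPolynomial σ R) :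
    (convexHull ℝ (φ '' g.support + φ '' h.support)).extremePoints ℝ ⊆
      φ '' (g * h).support := by
  classical
  intro p hp
  obtain ⟨_, ⟨u, hu, rfl⟩, _, ⟨v, hv, rfl⟩, rfl⟩ := extremePoints_convexHull_subset hp
  refine ⟨u + v, add_mem_support_mul_of_uniqueAdd hu hv ?_, map_add φ u v⟩
  rw [← UniqueAdd.addHom_image_iff φ.toAddHom hφ]
  refine uniqueAdd_of_add_mem_extremePoints ?_ (Finset.mem_image_of_mem _ hu)
    (Finset.mem_image_of_mem _ hv) hp
  push_cast
  exact subset_convexHull ℝ _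

theorem convexHull_image_support_mul [TopologicalSpace E] [T2Space E]
    [IsTopologicalAddGroup E] [ContinuousSMul ℝ E] [LocallyConvexSpace ℝ E] [NoZeroDivisors R]
    {φ : (σ →₀ ℕ) →+ E} (hφ : Function.Injective φ) (g h : MvPolynomial σ R) :
    convexHull ℝ (φ '' (g * h).support) =
      convexHull ℝ (φ '' g.support) + convexHull ℝ (φ '' h.support) := by
  rw [← convexHull_add]
  refine (convexHull_mono (image_support_mul_subset φ g h)).antisymm ?_
  have hfin : (φ '' g.support + φ '' h.support).Finite :=
    (g.support.finite_toSet.image φ).add (h.support.finite_toSet.image φ)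
  rw [← hfin.convexHull_extremePoints_convexHull]
  exact convexHull_mono (extremePoints_convexHull_image_support_add_subset hφ g h)

end MvPolynomial

def exponentVector (σ : Type*) : (σ →₀ ℕ) →+ (σ → ℝ) where
  toFun m i := m i
  map_zero' := by ext; simp
  map_add' u v := by ext; simp

theorem exponentVector_injective (σ : Type*) : Function.Injective (exponentVector σ) :=
  fun _ _ huv => Finsupp.ext fun i => Nat.cast_injective (congrFun huv i)

/-- Ostrowski's theorem: if `f = g · h`, then the Newton polytope of `f` is the
Minkowski sum of the Newton polytopes of `g` and `h`. -/
theorem newtonPolytope_mul [Field K] (f g h : MvPolynomial (Fin n) K)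
    (hf : f = g * h) :
    newtonPolytope f = newtonPolytope g + newtonPolytope h := by
  subst hf
  exact MvPolynomial.convexHull_image_support_mul (exponentVector_injective (Fin n)) g h
end

section
/- Let f ∈ K[X₁,…,X_n] be a unidimensional polynomial of direction δ ∈ ℤⁿ. Then there exists a unique univariate polynomial f_π ∈ K[Z] of valuation 0 such that f(X) = X^a · f_π(X^δ) for some a ∈ ℤⁿ; moreover this a is necessarily in ℕⁿ. -/
variable {K : Type*} {n : ℕ}

/-- The Laurent polynomial ring `K[X₁^{±1}, …, X_n^{±1}]`, in which monomials with
integer exponent vectors such as `X^δ` make sense. -/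
abbrev LaurentRing (K : Type*) [CommSemiring K] (n : ℕ) :=
  AddMonoidAlgebra K (Fin n →₀ ℤ)

/-- `f` has only nonnegative exponents, i.e. `f` is an ordinary polynomial. -/
def HasNatSupport [CommSemiring K] (f : LaurentRing K n) : Prop :=
  ∀ m ∈ f.coeff.support, ∀ i, (0 : ℤ) ≤ m i

/-- A polynomial is unidimensional of direction `δ` if it has at least two monomials
and the difference of the exponent vectors of any two of its monomials is an integer
multiple of `δ`. -/
def Unidimensional [CommSemiring K] (δ : Fin n →₀ ℤ) (f : LaurentRing K n) : Prop :=
  2 ≤ f.coeff.support.card ∧ ∀ a ∈ f.coeff.support, ∀ b ∈ f.coeff.support, ∃ l : ℤ, a - b = l • δ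

/-- The substitution `Z ↦ X^δ` applied to a univariate polynomial `p ∈ K[Z]`. -/
noncomputable def substMonomial [CommSemiring K] (δ : Fin n →₀ ℤ) (p : Polynomial K) :
    LaurentRing K n :=
  p.sum fun m c => AddMonoidAlgebra.single (m • δ) c

/-- `p` is the univariate projection of `f` in direction `δ`: `p` has valuation `0`
and `f = X^a · p(X^δ)` for some `a ∈ ℤⁿ`. -/
def IsProjection [CommSemiring K] (δ : Fin n →₀ ℤ) (f : LaurentRing K n)
    (p : Polynomial K) : Prop :=
  p.coeff 0 ≠ 0 ∧ ∃ a : Fin n →₀ ℤ, f = AddMonoidAlgebra.single a 1 * substMonomial δ p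

/-! All exponents of `f` lie on a line `b + ℤδ`; starting it at the exponent `a` of least
`δ`-coordinate, they lie on the ray `a + ℕδ`, and `f = X^a · p(X^δ)` where `p` reads the
coefficients of `f` along that ray. As `δ ≠ 0`, `k ↦ a + kδ` is injective, so `X^a · p(X^δ)`
has coefficient `p_k` at `a + kδ` and none off the ray. Hence `p_0 ≠ 0` makes `a` an exponent
of `f` (so `a ∈ ℕⁿ`) and the lowest point of the ray, which determines `a` and then `p`. -/

open AddMonoidAlgebra Function

lemma injective_add_nsmul {M : Type*} [AddCommGroup M] [IsAddTorsionFree M] (a : M) {δ : M}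
    (hδ : δ ≠ 0) : Injective fun k : ℕ => a + k • δ := by
  intro k l h
  have : (k : ℤ) • δ = (l : ℤ) • δ := by simpa only [natCast_zsmul, add_right_inj] using h
  exact_mod_cast smul_left_injective ℤ hδ this

lemma Finset.exists_mem_forall_eq_add_nsmul {M : Type*} [AddCommGroup M] {S : Finset M}
    (hS : S.Nonempty) {δ : M} (h : ∀ x ∈ S, ∀ y ∈ S, ∃ l : ℤ, x - y = l • δ) :
    ∃ a ∈ S, ∀ x ∈ S, ∃ k : ℕ, x = a + k • δ := by
  obtain ⟨b, hb⟩ := hS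
  have : ∀ x, ∃ l : ℤ, x ∈ S → x - b = l • δ := fun x => by
    by_cases hx : x ∈ S
    · obtain ⟨l, hl⟩ := h x hx b hb
      exact ⟨l, fun _ => hl⟩
    · exact ⟨0, fun h => absurd h hx⟩
  choose l hl using this
  obtain ⟨a, ha, hmin⟩ := S.exists_min_image l ⟨b, hb⟩
  refine ⟨a, ha, fun x hx => ⟨(l x - l a).toNat, ?_⟩⟩
  have hxa : x - a = (l x - l a) • δ := by
    rw [sub_smul, ← hl x hx, ← hl a ha, sub_sub_sub_cancel_right]
  rw [← natCast_zsmul, Int.toNat_of_nonneg (sub_nonneg.2 (hmin x hx)), ← hxa,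
    add_sub_cancel]

lemma Unidimensional.direction_ne_zero [CommSemiring K] {δ : Fin n →₀ ℤ} {f : LaurentRing K n}
    (hu : Unidimensional δ f) : δ ≠ 0 := by
  rintro rfl
  obtain ⟨x, hx, y, hy, hxy⟩ := Finset.one_lt_card.1 hu.1
  obtain ⟨l, hl⟩ := hu.2 x hx y hy
  exact hxy (sub_eq_zero.1 (by simpa using hl))

section
variable [CommSemiring K] {δ : Fin n →₀ ℤ}

lemma coeff_single_mul_substMonomial (a : Fin n →₀ ℤ) (p : Polynomial K) :
    (single a 1 * substMonomial δ p).coeff =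
      Finsupp.mapDomain (fun k : ℕ => a + k • δ) p.toFinsupp.coeff := by
  simp [substMonomial, Polynomial.sum, Finset.mul_sum, single_mul_single, Finsupp.mapDomain,
    Finsupp.sum, Polynomial.support_toFinsupp, Polynomial.toFinsupp_apply]

lemma exists_eq_add_nsmul_of_mem_support_single_mul_substMonomial {a x : Fin n →₀ ℤ}
    {p : Polynomial K} (hx : x ∈ (single a 1 * substMonomial δ p).coeff.support) :
    ∃ k : ℕ, x = a + k • δ := by
  classical
  rw [coeff_single_mul_substMonomial] at hx
  obtain ⟨k, -, rfl⟩ := Finset.mem_image.1 (Finsupp.mapDomain_support hx)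
  exact ⟨k, rfl⟩

lemma coeff_single_mul_substMonomial_add_nsmul (hδ : δ ≠ 0) (a : Fin n →₀ ℤ)
    (p : Polynomial K) (k : ℕ) :
    (single a 1 * substMonomial δ p).coeff (a + k • δ) = p.coeff k := by
  rw [coeff_single_mul_substMonomial,
    Finsupp.mapDomain_apply (injective_add_nsmul a hδ),
    Polynomial.toFinsupp_apply]

lemma mem_support_single_mul_substMonomial (hδ : δ ≠ 0) (a : Fin n →₀ ℤ) {p : Polynomial K}
    (hp : p.coeff 0 ≠ 0) : a ∈ (single a 1 * substMonomial δ p).coeff.support := by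
  simpa using Finsupp.mem_support_iff.2
    ((coeff_single_mul_substMonomial_add_nsmul hδ a p 0).trans_ne hp)

lemma exists_isProjection (hδ : δ ≠ 0) {f : LaurentRing K n} {a : Fin n →₀ ℤ}
    (ha : a ∈ f.coeff.support) (hf : ∀ x ∈ f.coeff.support, ∃ k : ℕ, x = a + k • δ) :
    ∃ p : Polynomial K, IsProjection δ f p := by
  have hinj := injective_add_nsmul a hδ
  let p : Polynomial K := ⟨ofCoeff (f.coeff.comapDomain _ hinj.injOn)⟩
  refine ⟨p, ?_, a, coeff_injective ?_⟩
  · simpa [p, Polynomial.coeff_ofFinsupp, Finsupp.comapDomain_apply] using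
      Finsupp.mem_support_iff.1 ha
  · rw [coeff_single_mul_substMonomial]
    refine (Finsupp.mapDomain_comapDomain _ hinj _ fun x hx => ?_).symm
    obtain ⟨k, rfl⟩ := hf x hx
    exact ⟨k, rfl⟩

lemma IsProjection.eq (hδ : δ ≠ 0) {f : LaurentRing K n} {p q : Polynomial K}
    (hp : IsProjection δ f p) (hq : IsProjection δ f q) : p = q := by
  obtain ⟨hp0, a, rfl⟩ := hp
  obtain ⟨hq0, b, hab⟩ := hq
  obtain ⟨k, hk⟩ := exists_eq_add_nsmul_of_mem_support_single_mul_substMonomial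
    (hab ▸ mem_support_single_mul_substMonomial hδ a hp0)
  obtain ⟨l, hl⟩ := exists_eq_add_nsmul_of_mem_support_single_mul_substMonomial
    (hab.symm ▸ mem_support_single_mul_substMonomial hδ b hq0)
  have hkl : l + k = 0 := injective_add_nsmul a hδ <| by
    simp only [zero_smul, add_zero, add_smul, ← add_assoc, ← hl, ← hk]
  obtain rfl : b = a := by simpa [show l = 0 by omega] using hl
  ext j
  rw [← coeff_single_mul_substMonomial_add_nsmul hδ b p j, hab,
    coeff_single_mul_substMonomial_add_nsmul hδ b q j]

end

theorem exists_unique_projection_general [Field K]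
    (δ : Fin n →₀ ℤ)
    (f : LaurentRing K n) (hf : HasNatSupport f) (hu : Unidimensional δ f) :
    (∃! p : Polynomial K, IsProjection δ f p) ∧
      ∀ (p : Polynomial K) (a : Fin n →₀ ℤ), p.coeff 0 ≠ 0 →
        f = AddMonoidAlgebra.single a 1 * substMonomial δ p → ∀ i, (0 : ℤ) ≤ a i := by
  have hδ := hu.direction_ne_zero
  obtain ⟨a, ha, hbase⟩ :=
    Finset.exists_mem_forall_eq_add_nsmul (Finset.card_pos.1 (by linarith [hu.1])) hu.2
  obtain ⟨p, hp⟩ := exists_isProjection hδ ha hbase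
  refine ⟨⟨p, hp, fun q hq => hq.eq hδ hp⟩, fun q b hq hfq => ?_⟩
  exact hf b (hfq ▸ mem_support_single_mul_substMonomial hδ b hq)

/-- Existence and uniqueness of the univariate projection of a unidimensional
polynomial `f` of direction `δ`: there is a unique `f_π ∈ K[Z]` of valuation `0`
with `f = X^a · f_π(X^δ)` for some `a ∈ ℤⁿ`; moreover such an `a` necessarily lies
in `ℕⁿ`. Here `δ` is a direction: primitive, with first nonzero coordinate positive. -/
theorem exists_unique_projection [Field K]
    (δ : Fin n →₀ ℤ)
    (hprim : ∀ e : ℤ, (∀ i, e ∣ δ i) → IsUnit e)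
    (hpos : ∀ i : Fin n, (∀ j : Fin n, j < i → δ j = 0) → 0 ≤ δ i)
    (f : LaurentRing K n) (hf : HasNatSupport f) (hu : Unidimensional δ f) :
    (∃! p : Polynomial K, IsProjection δ f p) ∧
      ∀ (p : Polynomial K) (a : Fin n →₀ ℤ), p.coeff 0 ≠ 0 →
        f = AddMonoidAlgebra.single a 1 * substMonomial δ p → ∀ i, (0 : ℤ) ≤ a i :=
  exists_unique_projection_general δ f hf hu
end

section
/- Let f and g ∈ K[X₁,…,X_n] be unidimensional polynomials of the same direction δ, with univariate projections f_π and g_π ∈ K[Z] respectively. Then mult_g(f) = mult_{g_π}(f_π). -/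
variable {K : Type*} {n : ℕ}

/-- The multiplicity of `g` as a factor of `f`, i.e. the largest `μ` with `g ^ μ ∣ f`. -/
noncomputable def multOf {R : Type*} [CommRing R] (g f : R) : ℕ :=
  sSup {μ : ℕ | g ^ μ ∣ f}


/-!
Write `f = X^a · fπ(X^δ)` and `g = X^b · gπ(X^δ)`. Monomials are units of the Laurent ring, so
`g^μ ∣ f` iff `gπ(X^δ)^μ ∣ fπ(X^δ)`. The substitution `Z ↦ X^δ` is the ring embedding
`K[Z^{±1}] → K[X^{±1}]` induced by the injective `m ↦ m • δ` (`δ ≠ 0` because `f` has two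
monomials), and it reflects divisibility: restricting coefficients to the lattice `ℤδ` is a
retraction that is linear over `K[Z^{±1}]`. Finally, divisibility by `gπ^μ` in `K[Z^{±1}]` and in
`K[Z]` agree because `gπ(0) ≠ 0` makes `gπ` coprime to `Z`.
-/

open Function Polynomial

namespace AddMonoidAlgebra

lemma isUnit_single_one {R G : Type*} [Semiring R] [AddGroup G] (g : G) :
    IsUnit (single g (1 : R)) :=
  (Group.isUnit (Multiplicative.ofAdd g)).map (of R G)

lemma comapDomain_single_of_notMem_range {R M N : Type*} [Semiring R] {f : M → N}
    (hf : Injective f) {x : N} (hx : x ∉ Set.range f) (r : R) :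
    comapDomain f hf (single x r) = 0 := by
  ext; simp [*]

lemma comapDomain_mapDomain {R M N : Type*} [Semiring R] {f : M → N} (hf : Injective f)
    (p : R[M]) : comapDomain f hf (mapDomain f p) = p := by
  induction p using induction_linear with
  | zero => simp
  | add p q hp hq => rw [mapDomain_add, comapDomain_add, hp, hq]
  | single g r => rw [mapDomain_single, comapDomain_single_map]

section Group

variable {R G H : Type*} [Semiring R] [AddGroup G] [AddGroup H] {φ : G →+ H}

lemma comapDomain_mapDomain_mul (hφ : Injective φ) (p : R[G]) (x : R[H]) :
    comapDomain φ hφ (mapDomain φ p * x) = p * comapDomain φ hφ x := by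
  induction p using induction_linear with
  | zero => simp
  | add p q hp hq => rw [mapDomain_add, add_mul, comapDomain_add, hp, hq, add_mul]
  | single g r =>
    induction x using induction_linear with
    | zero => simp
    | add x y hx hy => rw [mul_add, comapDomain_add, hx, hy, comapDomain_add, mul_add]
    | single h s =>
      rw [mapDomain_single, single_mul_single]
      by_cases hh : h ∈ Set.range φ
      · obtain ⟨g', rfl⟩ := hh
        rw [← map_add, comapDomain_single_map, comapDomain_single_map, single_mul_single]
      · have hgh : φ g + h ∉ Set.range φ := by
          rintro ⟨g', hg'⟩
          exact hh ⟨-g + g', by rw [map_add, hg', map_neg, neg_add_cancel_left]⟩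
        rw [comapDomain_single_of_notMem_range hφ hgh, comapDomain_single_of_notMem_range hφ hh,
          mul_zero]

lemma mapDomainRingHom_dvd_mapDomainRingHom_iff (hφ : Injective φ) {p q : R[G]} :
    mapDomainRingHom R φ p ∣ mapDomainRingHom R φ q ↔ p ∣ q := by
  refine ⟨fun ⟨x, hx⟩ ↦ ⟨comapDomain φ hφ x, ?_⟩, map_dvd (mapDomainRingHom R φ)⟩
  rw [← comapDomain_mapDomain hφ q, ← comapDomain_mapDomain_mul]
  exact congrArg _ hx

end Group

end AddMonoidAlgebra

namespace Polynomial

lemma toLaurent_dvd_toLaurent_iff {R : Type*} [CommSemiring R] {p q : R[X]}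
    (hp : IsCoprime p X) : toLaurent p ∣ toLaurent q ↔ p ∣ q := by
  refine ⟨fun ⟨h, hh⟩ ↦ ?_, _root_.map_dvd toLaurent⟩
  obtain ⟨N, h', hh'⟩ := h.exists_T_pow
  have hqX : q * X ^ N = p * h' := toLaurent_injective <| by
    rw [map_mul, map_mul, toLaurent_X_pow, hh', hh, mul_assoc]
  exact hp.pow_right.dvd_of_dvd_mul_right ⟨h', hqX⟩

lemma isCoprime_X_of_coeff_zero_ne_zero {K : Type*} [Field K] {p : K[X]} (hp : p.coeff 0 ≠ 0) :
    IsCoprime p X :=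
  (prime_X.coprime_iff_not_dvd.mpr (mt X_dvd_iff.mp hp)).symm

end Polynomial

lemma Unidimensional.ne_zero [CommSemiring K] {δ : Fin n →₀ ℤ} {f : LaurentRing K n}
    (hf : Unidimensional δ f) : δ ≠ 0 := by
  rintro rfl
  obtain ⟨x, hx, y, hy, hxy⟩ := Finset.one_lt_card.mp hf.1
  obtain ⟨l, hl⟩ := hf.2 x hx y hy
  exact hxy (sub_eq_zero.mp (by rwa [smul_zero] at hl))

lemma substMonomial_eq_mapDomainRingHom_toLaurent [CommSemiring K] (δ : Fin n →₀ ℤ)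
    (p : K[X]) :
    substMonomial δ p = AddMonoidAlgebra.mapDomainRingHom K (zmultiplesHom _ δ) (toLaurent p) := by
  induction p using Polynomial.induction_on' with
  | add p q hp hq =>
    rw [map_add, map_add, ← hp, ← hq, substMonomial, substMonomial,
      Polynomial.sum_add_index _ _ _ (fun _ ↦ AddMonoidAlgebra.single_zero _)
        (fun _ _ _ ↦ AddMonoidAlgebra.single_add _ _ _), substMonomial]
  | monomial m c =>
    rw [substMonomial, sum_monomial_index c (fun m c ↦ AddMonoidAlgebra.single (m • δ) c)
      (AddMonoidAlgebra.single_zero _), toLaurent_apply, toFinsupp_monomial,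
      AddMonoidAlgebra.mapDomainRingHom_apply, AddMonoidAlgebra.mapDomain_single,
      AddMonoidAlgebra.mapDomain_single, zmultiplesHom_apply, natCast_zsmul]

theorem multOf_eq_multOf_projection_general [Field K]
    (δ : Fin n →₀ ℤ) (f g : LaurentRing K n)
    (hfu : Unidimensional δ f)
    (fπ gπ : Polynomial K)
    (hfπ : IsProjection δ f fπ) (hgπ : IsProjection δ g gπ) :
    multOf g f = multOf gπ fπ := by
  obtain ⟨-, a, rfl⟩ := hfπ
  obtain ⟨hg0, b, rfl⟩ := hgπ
  have hδ : Injective (zmultiplesHom (Fin n →₀ ℤ) δ) := smul_left_injective ℤ hfu.ne_zero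
  have hdvd (μ : ℕ) : (AddMonoidAlgebra.single b 1 * substMonomial δ gπ) ^ μ ∣
      AddMonoidAlgebra.single a 1 * substMonomial δ fπ ↔ gπ ^ μ ∣ fπ := by
    rw [mul_pow, (associated_unit_mul_left _ _
        ((AddMonoidAlgebra.isUnit_single_one b).pow μ)).dvd_iff_dvd_left,
      (associated_unit_mul_left _ _ (AddMonoidAlgebra.isUnit_single_one a)).dvd_iff_dvd_right,
      substMonomial_eq_mapDomainRingHom_toLaurent, substMonomial_eq_mapDomainRingHom_toLaurent,
      ← map_pow, ← map_pow, AddMonoidAlgebra.mapDomainRingHom_dvd_mapDomainRingHom_iff hδ,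
      toLaurent_dvd_toLaurent_iff (isCoprime_X_of_coeff_zero_ne_zero hg0).pow_left]
  exact congrArg sSup (Set.ext hdvd)

/-- If `f` and `g` are unidimensional polynomials of the same direction `δ`, with
univariate projections `f_π` and `g_π`, then `mult_g(f) = mult_{g_π}(f_π)`.
(Divisibility by `g^μ` is taken in the Laurent polynomial ring, i.e. up to monomial
factors, as in the lifting/projection correspondence.) -/
theorem multOf_eq_multOf_projection [Field K]
    (δ : Fin n →₀ ℤ) (f g : LaurentRing K n)
    (hfN : HasNatSupport f) (hgN : HasNatSupport g)
    (hfu : Unidimensional δ f) (hgu : Unidimensional δ g)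
    (fπ gπ : Polynomial K)
    (hfπ : IsProjection δ f fπ) (hgπ : IsProjection δ g gπ) :
    multOf g f = multOf gπ fπ :=
  multOf_eq_multOf_projection_general δ f g hfu fπ gπ hfπ hgπ
end

section
/- If f = g·h is a product of two unidimensional polynomials of the same direction δ, then the univariate projection of f equals the product of the univariate projections of g and h: f_π = g_π · h_π. -/
variable {K : Type*} {n : ℕ}

section substMonomial

variable [CommSemiring K] (δ : Fin n →₀ ℤ)

theorem substMonomial_eq_mapDomain (p : Polynomial K) :
    substMonomial δ p = AddMonoidAlgebra.mapDomain (multiplesHom _ δ) p.toFinsupp := by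
  simp only [substMonomial, AddMonoidAlgebra.mapDomain, Finsupp.mapDomain,
    AddMonoidAlgebra.ofCoeff_finsuppSum, AddMonoidAlgebra.ofCoeff_single]
  rfl

theorem substMonomial_mul (p q : Polynomial K) :
    substMonomial δ (p * q) = substMonomial δ p * substMonomial δ q := by
  simp only [substMonomial_eq_mapDomain, Polynomial.toFinsupp_mul]
  exact AddMonoidAlgebra.mapDomain_mul (multiplesHom _ δ) _ _

end substMonomial

theorem isProjection_mul_general [CommRing K] [IsDomain K]
    (δ : Fin n →₀ ℤ) (g h : LaurentRing K n)
    (gπ hπ : Polynomial K)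
    (hgπ : IsProjection δ g gπ) (hhπ : IsProjection δ h hπ) :
    IsProjection δ (g * h) (gπ * hπ) := by
  obtain ⟨hg0, a, rfl⟩ := hgπ
  obtain ⟨hh0, b, rfl⟩ := hhπ
  have hmonomial : (AddMonoidAlgebra.single (a + b) 1 : LaurentRing K n) =
      AddMonoidAlgebra.single a 1 * AddMonoidAlgebra.single b 1 := by
    rw [AddMonoidAlgebra.single_mul_single, one_mul]
  refine ⟨Polynomial.mul_coeff_zero gπ hπ ▸ mul_ne_zero hg0 hh0, a + b, ?_⟩
  rw [substMonomial_mul, hmonomial]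
  ring

/-- If `f = g·h` with `g, h` unidimensional of the same direction `δ`, then the
univariate projection of `f` is the product of those of `g` and `h`. -/
theorem isProjection_mul [CommRing K] [IsDomain K]
    (δ : Fin n →₀ ℤ) (g h : LaurentRing K n)
    (hgu : Unidimensional δ g) (hhu : Unidimensional δ h)
    (gπ hπ : Polynomial K)
    (hgπ : IsProjection δ g gπ) (hhπ : IsProjection δ h hπ) :
    IsProjection δ (g * h) (gπ * hπ) :=
  isProjection_mul_general δ g h gπ hπ hgπ hhπ
end

section
/- Let φ be a Puiseux series with minimal polynomial g ∈ K[X,Y] of bidegree (d_X, d_Y), α, β ≥ k nonnegative integers, and ψ(X) = X^α φ(X)^β. Then ψ^{(k)}(X) = X^{α−k} φ(X)^{β−k} · s_k(X, φ(X)) / g_Y(X, φ(X))^{2k−1}, where s_k ∈ K[X,Y] satisfies deg_X(s_k) ≤ (2k−1)d_X and deg_Y(s_k) ≤ (2k−1)d_Y − (k−1). -/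
open HahnSeries

variable {K L : Type*}

/-- Formal derivative of a Hahn/Puiseux series in one variable. -/
noncomputable def Dp [Field L] (f : HahnSeries ℚ L) : HahnSeries ℚ L where
  coeff q := (q + 1) • f.coeff (q + 1)
  isPWO_support' := by
    have himg := f.isPWO_support.image_of_monotone
      (f := fun q : ℚ => q - 1) (fun a b hab => by simpa using sub_le_sub_right hab 1)
    refine himg.mono fun q hq => ?_
    have hf : f.coeff (q + 1) ≠ 0 := by
      intro h
      apply hq
      simp [Function.mem_support, h]
    exact ⟨q + 1, hf, by ring⟩

/-- A Hahn series over `ℚ` is a Puiseux series if the exponents in its support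
have a common denominator. -/
def IsPuiseux [Zero L] (f : HahnSeries ℚ L) : Prop :=
  ∃ d : ℕ, 0 < d ∧ ∀ q ∈ f.support, ∃ m : ℤ, q = (m : ℚ) / d


/-- Evaluation of a bivariate polynomial over `K` at `(X, φ)`, where `X` is the
Puiseux-series variable and `φ` is a Puiseux series. Variable `0` is `X` and
variable `1` is `Y`. -/
noncomputable def evalXY [Field K] [Field L] [Algebra K L] (φ : HahnSeries ℚ L) :
    MvPolynomial (Fin 2) K →ₐ[K] HahnSeries ℚ L :=
  MvPolynomial.aeval ![(HahnSeries.single (1 : ℚ) (1 : L) : HahnSeries ℚ L), φ]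

/- Write `G = g_Y(X, φ)`. Differentiating `g(X, φ) = 0` gives `G φ' = -g_X(X, φ)`, hence
`G · (h(X, φ))' = (J h)(X, φ)` for every polynomial `h`, where `J h = g_Y h_X - g_X h_Y` is a
derivation of `K[X, Y]`. So each differentiation of `ψ^(k) G^(2k-1)` costs two more factors `G`:
one for the chain rule and one for `(G^(2k-1))'`. The numerators then obey a polynomial
recursion, and since `X J` and `Y J` raise the degree in each variable by at most that of `g`,
one step raises `deg_X` by at most `2 d_X` and `deg_Y` by at most `d_Y + deg_Y g_Y ≤ 2 d_Y - 1`. -/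

section SeriesDerivative

variable [Field L]

theorem Dp_add (f g : HahnSeries ℚ L) : Dp (f + g) = Dp f + Dp g := by
  ext q
  simp [Dp, smul_add]

theorem Dp_zero : Dp (0 : HahnSeries ℚ L) = 0 := by
  ext q
  simp [Dp]

theorem Dp_single (a : ℚ) (r : L) : Dp (single a r) = single (a - 1) (a • r) := by
  ext q
  simp only [Dp, coeff_single]
  by_cases h : q = a - 1
  · simp [h]
  · simp [h, show q + 1 ≠ a by intro h'; exact h (by linarith)]

/- The Euler operator `x d/dx`: its Leibniz rule needs no shift of exponents, and
`Dp = x⁻¹ * eulerDeriv` inherits it. -/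
def eulerDeriv (f : HahnSeries ℚ L) : HahnSeries ℚ L where
  coeff q := q • f.coeff q
  isPWO_support' := f.isPWO_support.mono fun q hq hf => hq (by simp [hf])

@[simp]
theorem coeff_eulerDeriv (f : HahnSeries ℚ L) (q : ℚ) : (eulerDeriv f).coeff q = q • f.coeff q :=
  rfl

theorem support_eulerDeriv_subset (f : HahnSeries ℚ L) :
    (eulerDeriv f).support ⊆ f.support :=
  fun q hq hf => hq (by simp [eulerDeriv, hf])

theorem Dp_eq_single_mul_eulerDeriv (f : HahnSeries ℚ L) :
    Dp f = single (-1) 1 * eulerDeriv f := by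
  ext q
  have h := coeff_single_mul_add (r := (1 : L)) (x := eulerDeriv f) (a := q + 1) (b := -1)
  rw [add_neg_cancel_right, one_mul] at h
  exact h.symm

variable [CharZero L]

theorem eulerDeriv_mul (f g : HahnSeries ℚ L) :
    eulerDeriv (f * g) = eulerDeriv f * g + f * eulerDeriv g := by
  ext q
  rw [coeff_add, coeff_mul_left' f.isPWO_support (support_eulerDeriv_subset f),
    coeff_mul_right' g.isPWO_support (support_eulerDeriv_subset g), coeff_eulerDeriv, coeff_mul,
    Finset.smul_sum, ← Finset.sum_add_distrib]
  refine Finset.sum_congr rfl fun ij hij => ?_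
  rw [← (Finset.mem_antidiagonal.1 hij).2.2]
  simp only [coeff_eulerDeriv, add_smul, smul_mul_assoc, mul_smul_comm]

theorem Dp_mul (f g : HahnSeries ℚ L) : Dp (f * g) = Dp f * g + f * Dp g := by
  simp only [Dp_eq_single_mul_eulerDeriv, eulerDeriv_mul]
  ring

theorem Dp_pow (f : HahnSeries ℚ L) (n : ℕ) :
    Dp (f ^ (n + 1)) = (n + 1) * f ^ n * Dp f := by
  induction n with
  | zero => simp
  | succ n ih =>
    rw [pow_succ, Dp_mul, ih]
    push_cast
    ring

end SeriesDerivative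

open MvPolynomial

section Jacobian

variable {R : Type*} [CommRing R]

theorem support_X_mul_pderiv_subset {σ : Type*} [DecidableEq σ] (j : σ) (p : MvPolynomial σ R) :
    (X j * pderiv j p).support ⊆ p.support := by
  intro m hm
  rw [mem_support_iff, coeff_X_mul', coeff_pderiv] at hm
  split_ifs at hm with hj
  · rw [tsub_add_cancel_of_le (Finsupp.single_le_iff.2 (Nat.one_le_iff_ne_zero.2
      (Finsupp.mem_support_iff.1 hj)))] at hm
    exact mem_support_iff.2 (left_ne_zero_of_mul hm)
  · exact absurd rfl hm

theorem degreeOf_X_mul_pderiv_le {σ : Type*} [DecidableEq σ] (i j : σ) (p : MvPolynomial σ R) :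
    degreeOf i (X j * pderiv j p) ≤ degreeOf i p :=
  degreeOf_le_iff.2 fun _ hm => monomial_le_degreeOf i (support_X_mul_pderiv_subset j p hm)

theorem degreeOf_pderiv_le_of_ne {σ : Type*} [DecidableEq σ] {i j : σ} (hij : i ≠ j)
    (p : MvPolynomial σ R) : degreeOf i (pderiv j p) ≤ degreeOf i p := by
  have h := degreeOf_X_mul_pderiv_le i j p
  rwa [mul_comm, degreeOf_mul_X_of_ne _ hij] at h

theorem degreeOf_pderiv_lt [IsDomain R] {σ : Type*} [DecidableEq σ] (i : σ) {p : MvPolynomial σ R}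
    (hp : pderiv i p ≠ 0) : degreeOf i (pderiv i p) < degreeOf i p := by
  have h := degreeOf_X_mul_pderiv_le i i p
  rw [degreeOf_mul_eq (X_ne_zero i) hp, degreeOf_X_self] at h
  omega

theorem degreeOf_natCast_mul_le {σ : Type*} (i : σ) (n : ℕ) (p : MvPolynomial σ R) :
    degreeOf i ((n : MvPolynomial σ R) * p) ≤ degreeOf i p := by
  rw [← map_natCast (MvPolynomial.C : R →+* MvPolynomial σ R)]
  exact degreeOf_C_mul_le p i n

noncomputable def jacobianDeriv (g : MvPolynomial (Fin 2) R) :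
    Derivation R (MvPolynomial (Fin 2) R) (MvPolynomial (Fin 2) R) :=
  pderiv 1 g • pderiv 0 - pderiv 0 g • pderiv 1

theorem jacobianDeriv_apply (g h : MvPolynomial (Fin 2) R) :
    jacobianDeriv g h = pderiv 1 g * pderiv 0 h - pderiv 0 g * pderiv 1 h :=
  rfl

theorem degreeOf_X_mul_X_mul_jacobianDeriv_le (i : Fin 2) (g h : MvPolynomial (Fin 2) R) :
    degreeOf i (X 0 * X 1 * jacobianDeriv g h) ≤ degreeOf i g + degreeOf i h := by
  have hsplit : X 0 * X 1 * jacobianDeriv g h =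
      (X 1 * pderiv 1 g) * (X 0 * pderiv 0 h) - (X 0 * pderiv 0 g) * (X 1 * pderiv 1 h) := by
    rw [jacobianDeriv_apply]; ring
  rw [hsplit]
  refine (degreeOf_sub_le i _ _).trans (max_le ?_ ?_) <;>
    exact (degreeOf_mul_le i _ _).trans
      (add_le_add (degreeOf_X_mul_pderiv_le i _ g) (degreeOf_X_mul_pderiv_le i _ h))

noncomputable def jacobianCofactor (g s : MvPolynomial (Fin 2) R) (a b : ℕ) :
    MvPolynomial (Fin 2) R :=
  s * (((a + 1 : ℕ) : MvPolynomial (Fin 2) R) * (X 1 * pderiv 1 g) -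
      ((b + 1 : ℕ) : MvPolynomial (Fin 2) R) * (X 0 * pderiv 0 g)) +
    X 0 * X 1 * jacobianDeriv g s

theorem jacobianDeriv_X_pow_mul_X_pow_mul (g s : MvPolynomial (Fin 2) R) (a b : ℕ) :
    jacobianDeriv g (X 0 ^ (a + 1) * X 1 ^ (b + 1) * s) =
      X 0 ^ a * X 1 ^ b * jacobianCofactor g s a b := by
  simp only [Derivation.leibniz, Derivation.leibniz_pow, jacobianCofactor, jacobianDeriv_apply,
    pderiv_X_self, pderiv_X_of_ne zero_ne_one, pderiv_X_of_ne one_ne_zero, smul_eq_mul,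
    nsmul_eq_mul, add_tsub_cancel_right]
  push_cast
  ring

theorem degreeOf_jacobianCofactor_le (i : Fin 2) (g s : MvPolynomial (Fin 2) R) (a b : ℕ) :
    degreeOf i (jacobianCofactor g s a b) ≤ degreeOf i g + degreeOf i s := by
  have hlin : degreeOf i (((a + 1 : ℕ) : MvPolynomial (Fin 2) R) * (X 1 * pderiv 1 g) -
      ((b + 1 : ℕ) : MvPolynomial (Fin 2) R) * (X 0 * pderiv 0 g))
      ≤ degreeOf i g :=
    (degreeOf_sub_le i _ _).trans <| max_le
      ((degreeOf_natCast_mul_le i _ _).trans (degreeOf_X_mul_pderiv_le i 1 g))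
      ((degreeOf_natCast_mul_le i _ _).trans (degreeOf_X_mul_pderiv_le i 0 g))
  refine (degreeOf_add_le i _ _).trans (max_le ?_ (degreeOf_X_mul_X_mul_jacobianDeriv_le i g s))
  exact (degreeOf_mul_le i _ _).trans (by omega)

end Jacobian

section Numerator

variable {R : Type*} [CommRing R]

/- `derivNumerator g n a b` is the numerator `s_{n+1}` for `ψ = X^(a+n+1) φ^(b+n+1)`; the
indexing avoids truncated subtraction. -/
noncomputable def derivNumerator (g : MvPolynomial (Fin 2) R) : ℕ → ℕ → ℕ → MvPolynomial (Fin 2) R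
  | 0, a, b => jacobianCofactor g 1 a b
  | n + 1, a, b =>
    pderiv 1 g * jacobianCofactor g (derivNumerator g n (a + 1) (b + 1)) a b -
      ((2 * n + 1 : ℕ) : MvPolynomial (Fin 2) R) * (X 0 * X 1 * jacobianDeriv g (pderiv 1 g)) *
        derivNumerator g n (a + 1) (b + 1)

theorem degreeOf_derivNumerator_le (i : Fin 2) (g : MvPolynomial (Fin 2) R) (n a b : ℕ) :
    degreeOf i (derivNumerator g n a b) ≤ (n + 1) * degreeOf i g + n * degreeOf i (pderiv 1 g) := by
  induction n generalizing a b with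
  | zero => simpa [derivNumerator] using degreeOf_jacobianCofactor_le i g 1 a b
  | succ n ih =>
    set s := derivNumerator g n (a + 1) (b + 1)
    have hmain : degreeOf i (pderiv 1 g * jacobianCofactor g s a b) ≤
        degreeOf i (pderiv 1 g) + (degreeOf i g + degreeOf i s) :=
      (degreeOf_mul_le i _ _).trans (add_le_add le_rfl (degreeOf_jacobianCofactor_le i g s a b))
    have hcorr : degreeOf i (((2 * n + 1 : ℕ) : MvPolynomial (Fin 2) R) *
        (X 0 * X 1 * jacobianDeriv g (pderiv 1 g)) * s) ≤
        degreeOf i g + degreeOf i (pderiv 1 g) + degreeOf i s :=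
      (degreeOf_mul_le i _ _).trans (add_le_add ((degreeOf_natCast_mul_le i _ _).trans
        (degreeOf_X_mul_X_mul_jacobianDeriv_le i g (pderiv 1 g))) le_rfl)
    have hs := ih (a + 1) (b + 1)
    rw [derivNumerator]
    refine (degreeOf_sub_le i _ _).trans (max_le (hmain.trans ?_) (hcorr.trans ?_)) <;> linarith

end Numerator

section ChainRule

variable [Field K] [Field L] [Algebra K L]

@[simp]
theorem evalXY_X_zero (φ : HahnSeries ℚ L) :
    evalXY φ (X 0 : MvPolynomial (Fin 2) K) = single 1 1 := by
  simp [evalXY]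

@[simp]
theorem evalXY_X_one (φ : HahnSeries ℚ L) : evalXY φ (X 1 : MvPolynomial (Fin 2) K) = φ := by
  simp [evalXY]

theorem evalXY_X_pow_mul_X_pow_mul (φ : HahnSeries ℚ L) (s : MvPolynomial (Fin 2) K) (a b : ℕ) :
    evalXY φ (X 0 ^ a * X 1 ^ b * s) = single 1 1 ^ a * φ ^ b * evalXY φ s := by
  simp

theorem Dp_algebraMap (c : K) : Dp (algebraMap K (HahnSeries ℚ L) c) = 0 := by
  rw [HahnSeries.algebraMap_apply', PowerSeries.algebraMap_apply, HahnSeries.ofPowerSeries_C,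
    HahnSeries.C_apply, Dp_single, Rat.smul_def, Rat.cast_zero, zero_mul, single_eq_zero]

variable [CharZero L]

theorem Dp_evalXY (φ : HahnSeries ℚ L) (p : MvPolynomial (Fin 2) K) :
    Dp (evalXY φ p) = evalXY φ (pderiv 0 p) + evalXY φ (pderiv 1 p) * Dp φ := by
  induction p using MvPolynomial.induction_on with
  | C c => simp [evalXY, Dp_algebraMap]
  | add p q hp hq =>
    simp only [map_add, Dp_add, hp, hq]
    ring
  | mul_X p i ih =>
    rw [map_mul, Dp_mul, ih, Derivation.leibniz, Derivation.leibniz]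
    fin_cases i <;>
      simp only [Fin.zero_eta, Fin.mk_one, evalXY_X_zero, evalXY_X_one, pderiv_X_self,
        pderiv_X_of_ne zero_ne_one, pderiv_X_of_ne one_ne_zero, Dp_single, sub_self, one_smul,
        single_zero_one, smul_eq_mul, map_add, map_mul, map_zero, map_one] <;>
      ring

variable {φ : HahnSeries ℚ L} {g : MvPolynomial (Fin 2) K}

theorem evalXY_pderiv_mul_Dp_evalXY (hroot : evalXY φ g = 0) (p : MvPolynomial (Fin 2) K) :
    evalXY φ (pderiv 1 g) * Dp (evalXY φ p) = evalXY φ (jacobianDeriv g p) := by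
  have hg := Dp_evalXY φ g
  rw [hroot, Dp_zero] at hg
  rw [Dp_evalXY, jacobianDeriv_apply, map_sub, map_mul, map_mul]
  linear_combination -evalXY φ (pderiv 1 p) * hg

theorem evalXY_pderiv_mul_Dp_X_pow_mul_pow_mul (hroot : evalXY φ g = 0)
    (s : MvPolynomial (Fin 2) K) (a b : ℕ) :
    evalXY φ (pderiv 1 g) * Dp (single 1 1 ^ (a + 1) * φ ^ (b + 1) * evalXY φ s) =
      single 1 1 ^ a * φ ^ b * evalXY φ (jacobianCofactor g s a b) := by
  rw [← evalXY_X_pow_mul_X_pow_mul, evalXY_pderiv_mul_Dp_evalXY hroot,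
    jacobianDeriv_X_pow_mul_X_pow_mul, evalXY_X_pow_mul_X_pow_mul]

theorem Dp_iterate_mul_evalXY_pderiv_pow (hroot : evalXY φ g = 0) (n a b : ℕ) :
    Dp^[n + 1] (single 1 1 ^ (a + n + 1) * φ ^ (b + n + 1)) * evalXY φ (pderiv 1 g) ^ (2 * n + 1) =
      single 1 1 ^ a * φ ^ b * evalXY φ (derivNumerator g n a b) := by
  induction n generalizing a b with
  | zero =>
    simpa [derivNumerator, mul_comm] using evalXY_pderiv_mul_Dp_X_pow_mul_pow_mul hroot 1 a b
  | succ n ih =>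
    set G := evalXY φ (pderiv 1 g)
    set s := derivNumerator g n (a + 1) (b + 1)
    set F := Dp^[n + 1] (single 1 1 ^ (a + 1 + n + 1) * φ ^ (b + 1 + n + 1))
    have hF : F * G ^ (2 * n + 1) = single 1 1 ^ (a + 1) * φ ^ (b + 1) * evalXY φ s :=
      ih (a + 1) (b + 1)
    have hDF := congrArg Dp hF
    rw [Dp_mul, Dp_pow] at hDF
    have hG := evalXY_pderiv_mul_Dp_evalXY hroot (pderiv 1 g)
    have hM := evalXY_pderiv_mul_Dp_X_pow_mul_pow_mul hroot s a b
    rw [show a + (n + 1) + 1 = a + 1 + n + 1 by omega,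
      show b + (n + 1) + 1 = b + 1 + n + 1 by omega,
      Function.iterate_succ_apply', derivNumerator]
    simp only [map_sub, map_mul, map_natCast, evalXY_X_zero, evalXY_X_one]
    push_cast at hDF ⊢
    -- differentiate `hF` and multiply by `G²`; `hG` and `hM` evaluate the two `G * Dp _` terms
    linear_combination G ^ 2 * hDF + G * hM - (2 * n + 1) * G * Dp G * hF -
      (2 * n + 1) * single 1 1 ^ (a + 1) * φ ^ (b + 1) * evalXY φ s * hG

end ChainRule

theorem deriv_iterate_monomial_eq_ratio_general
    [Field K] [CharZero K] [Field L] [Algebra K L]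
    (φ : HahnSeries ℚ L)
    (g : MvPolynomial (Fin 2) K)
    (hroot : evalXY φ g = 0)
    (dX dY : ℕ) (hdX : g.degreeOf 0 = dX) (hdY : g.degreeOf 1 = dY)
    (hgY : evalXY φ (MvPolynomial.pderiv 1 g) ≠ 0)
    (k α β : ℕ) (hk : 1 ≤ k) (hα : k ≤ α) (hβ : k ≤ β) :
    ∃ s : MvPolynomial (Fin 2) K,
      s.degreeOf 0 ≤ (2 * k - 1) * dX ∧
      (s.degreeOf 1 : ℤ) ≤ (2 * k - 1) * dY - (k - 1) ∧
      Dp^[k] ((HahnSeries.single (1 : ℚ) (1 : L)) ^ α * φ ^ β) *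
          (evalXY φ (MvPolynomial.pderiv 1 g)) ^ (2 * k - 1) =
        (HahnSeries.single (1 : ℚ) (1 : L)) ^ (α - k) * φ ^ (β - k) *
          evalXY φ s := by
  have : CharZero L := charZero_of_injective_algebraMap (algebraMap K L).injective
  obtain ⟨n, rfl⟩ : ∃ n, k = n + 1 := ⟨k - 1, by omega⟩
  obtain ⟨a, rfl⟩ : ∃ a, α = a + n + 1 := ⟨α - (n + 1), by omega⟩
  obtain ⟨b, rfl⟩ : ∃ b, β = b + n + 1 := ⟨β - (n + 1), by omega⟩
  subst hdX hdY
  have hgY0 : degreeOf 0 (pderiv 1 g) ≤ degreeOf 0 g := degreeOf_pderiv_le_of_ne (by decide) g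
  have hgY1 : degreeOf 1 (pderiv 1 g) < degreeOf 1 g :=
    degreeOf_pderiv_lt 1 fun h => hgY (by rw [h, map_zero])
  have hs0 := degreeOf_derivNumerator_le 0 g n a b
  have hs1 := degreeOf_derivNumerator_le 1 g n a b
  rw [show 2 * (n + 1) - 1 = 2 * n + 1 by omega, show a + n + 1 - (n + 1) = a by omega,
    show b + n + 1 - (n + 1) = b by omega]
  refine ⟨derivNumerator g n a b, ?_, ?_, Dp_iterate_mul_evalXY_pderiv_pow hroot n a b⟩
  · nlinarith
  · push_cast
    nlinarith

/-- If `φ` is a Puiseux series with minimal polynomial `g` of bidegree `(dX, dY)` and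
`ψ = X^α φ^β` with `α, β ≥ k`, then
`ψ⁽ᵏ⁾ = X^(α−k) φ^(β−k) s_k(X, φ) / g_Y(X, φ)^(2k−1)` where
`deg_X s_k ≤ (2k−1)dX` and `deg_Y s_k ≤ (2k−1)dY − (k−1)`. -/
theorem deriv_iterate_monomial_eq_ratio
    [Field K] [CharZero K] [Field L] [Algebra K L] [IsAlgClosure K L]
    (φ : HahnSeries ℚ L) (hP : IsPuiseux φ)
    (g : MvPolynomial (Fin 2) K) (hirr : Irreducible g)
    (hroot : evalXY φ g = 0)
    (dX dY : ℕ) (hdX : g.degreeOf 0 = dX) (hdY : g.degreeOf 1 = dY)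
    (hgY : evalXY φ (MvPolynomial.pderiv 1 g) ≠ 0)
    (k α β : ℕ) (hk : 1 ≤ k) (hα : k ≤ α) (hβ : k ≤ β) :
    ∃ s : MvPolynomial (Fin 2) K,
      s.degreeOf 0 ≤ (2 * k - 1) * dX ∧
      (s.degreeOf 1 : ℤ) ≤ (2 * k - 1) * dY - (k - 1) ∧
      Dp^[k] ((HahnSeries.single (1 : ℚ) (1 : L)) ^ α * φ ^ β) *
          (evalXY φ (MvPolynomial.pderiv 1 g)) ^ (2 * k - 1) =
        (HahnSeries.single (1 : ℚ) (1 : L)) ^ (α - k) * φ ^ (β - k) *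
          evalXY φ s :=
  deriv_iterate_monomial_eq_ratio_general φ g hroot dX dY hdX hdY hgY k α β hk hα hβ
end
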